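/- arXiv:2604.04010 — 2 statements merged into one kernel-verified Lean document; each statement's English description precedes it below -/
import Mathlib

section
/- Let 0 < ν ≤ 1, k ∈ ℤ with k < 0, n ∈ ℕ with n ≥ 1, γ = √(k²−ν²), and p = ν/√(ν² + (n+γ)²). Then ν + k·p = ν·(n² + 2nγ)/(A·(A+|k|)) where A = √(ν² + (n+γ)²); moreover, there is a constant c_ν > 0 depending only on ν such that ν + k·p ≥ c_ν · n/(n+|k|). -/
/-!
Write `γ = √(k² - ν²)` and `A = √(ν² + (n + γ)²)`, so that `A² - k² = n² + 2nγ`; the identity is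
`ν + kν/A = ν(A + k)/A = ν(A² - k²)/(A(A + |k|))`. For the bound, `|k| - 1 ≤ γ ≤ |k|` gives
`n + 2γ ≥ (n + |k|)/2` and `A ≤ n + |k|`, so the numerator is at least `νn(n + |k|)/2` and the
denominator at most `2(n + |k|)²`; one can take `c_ν = ν/4`.
-/

open Real

lemma sqrt_sq_sub_sq_le_abs (ν k : ℝ) : √(k ^ 2 - ν ^ 2) ≤ |k| := by
  rw [← sqrt_sq_eq_abs]
  exact sqrt_le_sqrt (by nlinarith)

lemma abs_sub_one_le_sqrt_sq_sub_sq {ν k : ℝ} (hν : ν ^ 2 ≤ 1) (hk : 1 ≤ |k|) :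
    |k| - 1 ≤ √(k ^ 2 - ν ^ 2) := by
  rw [le_sqrt (by linarith) (by nlinarith [sq_abs k]), ← sq_abs k]
  nlinarith

lemma sq_add_sq_add_sqrt_sq_sub_sq {ν k : ℝ} (hνk : ν ^ 2 ≤ k ^ 2) (x : ℝ) :
    ν ^ 2 + (x + √(k ^ 2 - ν ^ 2)) ^ 2 = x ^ 2 + 2 * x * √(k ^ 2 - ν ^ 2) + k ^ 2 := by
  have hγ := sq_sqrt (sub_nonneg.mpr hνk)
  linear_combination hγ

lemma add_mul_div_eq_of_nonpos {ν k A : ℝ} (hk : k ≤ 0) (hA : 0 < A) :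
    ν + k * (ν / A) = ν * (A ^ 2 - k ^ 2) / (A * (A + |k|)) := by
  rw [abs_of_nonpos hk]
  have hAk : A + -k ≠ 0 := by linarith
  field_simp
  ring

lemma add_mul_div_sqrt_eq {ν k x : ℝ} (hk : k ≤ 0) (hνk : ν ^ 2 ≤ k ^ 2) (hx : 0 < x) :
    ν + k * (ν / √(ν ^ 2 + (x + √(k ^ 2 - ν ^ 2)) ^ 2)) =
      ν * (x ^ 2 + 2 * x * √(k ^ 2 - ν ^ 2)) /
        (√(ν ^ 2 + (x + √(k ^ 2 - ν ^ 2)) ^ 2) *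
          (√(ν ^ 2 + (x + √(k ^ 2 - ν ^ 2)) ^ 2) + |k|)) := by
  have hA : 0 < √(ν ^ 2 + (x + √(k ^ 2 - ν ^ 2)) ^ 2) :=
    sqrt_pos.mpr (by positivity)
  rw [add_mul_div_eq_of_nonpos hk hA, sq_sqrt (by positivity),
    sq_add_sq_add_sqrt_sq_sub_sq hνk, add_sub_cancel_right]

lemma sqrt_sq_add_sq_add_sqrt_le {ν k x : ℝ} (hνk : ν ^ 2 ≤ k ^ 2) (hx : 0 ≤ x) :
    √(ν ^ 2 + (x + √(k ^ 2 - ν ^ 2)) ^ 2) ≤ x + |k| := by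
  rw [sqrt_le_left (by positivity), sq_add_sq_add_sqrt_sq_sub_sq hνk]
  nlinarith [sqrt_sq_sub_sq_le_abs ν k, sq_abs k]

lemma div_le_add_mul_div_sqrt {ν k x : ℝ} (hν : 0 < ν) (hν1 : ν ≤ 1) (hk : k ≤ -1)
    (hx : 1 ≤ x) :
    ν / 4 * x / (x + |k|) ≤ ν + k * (ν / √(ν ^ 2 + (x + √(k ^ 2 - ν ^ 2)) ^ 2)) := by
  have hk1 : 1 ≤ |k| := by rw [abs_of_neg (by linarith)]; linarith
  have hνk : ν ^ 2 ≤ k ^ 2 := by rw [← sq_abs k]; nlinarith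
  rw [add_mul_div_sqrt_eq (by linarith) hνk (by linarith)]
  set γ := √(k ^ 2 - ν ^ 2)
  set A := √(ν ^ 2 + (x + γ) ^ 2)
  have hγ : |k| - 1 ≤ γ := abs_sub_one_le_sqrt_sq_sub_sq (by nlinarith) hk1
  have hA : A ≤ x + |k| := sqrt_sq_add_sq_add_sqrt_le hνk (by linarith)
  have hA0 : 0 < A := sqrt_pos.mpr (by positivity)
  have hnum : x * (x + |k|) / 2 ≤ x ^ 2 + 2 * x * γ := by nlinarith
  have hden : A * (A + |k|) ≤ 2 * (x + |k|) ^ 2 := by nlinarith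
  calc ν / 4 * x / (x + |k|) = ν * (x * (x + |k|) / 2) / (2 * (x + |k|) ^ 2) := by
        field_simp
        ring
    _ ≤ ν * (x ^ 2 + 2 * x * γ) / (A * (A + |k|)) := by gcongr

/-- For `k < 0`: the identity `ν + k p = ν(n² + 2nγ)/(A(A+|k|))` with
`A = √(ν² + (n+γ)²)`, and the lower bound `ν + k p ≥ c_ν n/(n+|k|)` with a
constant `c_ν > 0` depending only on `ν`. -/
theorem stmt9 (ν : ℝ) (hν : 0 < ν) (hν1 : ν ≤ 1) :
    (∀ k : ℤ, k < 0 → ∀ n : ℕ, 1 ≤ n →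
      ν + (k : ℝ) *
          (ν / Real.sqrt (ν ^ 2 + ((n : ℝ) + Real.sqrt ((k : ℝ) ^ 2 - ν ^ 2)) ^ 2)) =
        ν * ((n : ℝ) ^ 2 + 2 * n * Real.sqrt ((k : ℝ) ^ 2 - ν ^ 2)) /
          (Real.sqrt (ν ^ 2 + ((n : ℝ) + Real.sqrt ((k : ℝ) ^ 2 - ν ^ 2)) ^ 2) *
            (Real.sqrt (ν ^ 2 + ((n : ℝ) + Real.sqrt ((k : ℝ) ^ 2 - ν ^ 2)) ^ 2) +
              |(k : ℝ)|))) ∧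
    ∃ c : ℝ, 0 < c ∧ ∀ k : ℤ, k < 0 → ∀ n : ℕ, 1 ≤ n →
      c * n / ((n : ℝ) + |(k : ℝ)|) ≤
        ν + (k : ℝ) *
          (ν / Real.sqrt (ν ^ 2 + ((n : ℝ) + Real.sqrt ((k : ℝ) ^ 2 - ν ^ 2)) ^ 2)) := by
  have cast_le_neg_one {k : ℤ} (hk : k < 0) : (k : ℝ) ≤ -1 := by exact_mod_cast Int.le_sub_one_of_lt hk
  have one_le_cast {n : ℕ} (hn : 1 ≤ n) : (1 : ℝ) ≤ n := by exact_mod_cast hn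
  refine ⟨fun k hk n hn => ?_, ν / 4, by positivity, fun k hk n hn =>
    div_le_add_mul_div_sqrt hν hν1 (cast_le_neg_one hk) (one_le_cast hn)⟩
  have hνk : ν ^ 2 ≤ (k : ℝ) ^ 2 := by nlinarith [cast_le_neg_one hk]
  exact add_mul_div_sqrt_eq (by linarith [cast_le_neg_one hk]) hνk (by linarith [one_le_cast hn])
end

section
/- Let ν ∈ (0,1], k ∈ ℤ∖{0} with γ = γ_k = √(k²−ν²) > 0, and for n ≥ 1 define p_{n,k} = ν/√(ν² + (n+γ)²) and G_{n,k} = (2p_{n,k})^{2γ} · Γ(n+2γ+1) / (Γ(2γ+1)² · n!). Then there exist constants A_ν, B_ν < ∞ depending only on ν such that G_{n,k} ≤ A_ν · (B_ν/γ)^{4γ} for all such n and k. -/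
open Real Set


lemma fact_add_le (n : ℕ) : ∀ m : ℕ, (n + m).factorial ≤ n.factorial * (n + m + 1) ^ m := by
  intro m
  induction m with
  | zero => simp
  | succ m ih =>
    have h1 : (n + (m+1)).factorial = (n + m + 1) * (n + m).factorial := by
      rw [← Nat.add_assoc]; exact Nat.factorial_succ _
    rw [h1]
    calc (n + m + 1) * (n + m).factorial ≤ (n + m + 1) * (n.factorial * (n + m + 1) ^ m) :=
          Nat.mul_le_mul_left _ ih
      _ = n.factorial * (n + m + 1) ^ (m+1) := by ring
      _ ≤ n.factorial * (n + (m+1) + 1) ^ (m+1) := by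
          gcongr <;> omega

lemma succ_pow_le (m : ℕ) : ((m : ℝ) + 1) ^ m ≤ Real.exp 1 * (m : ℝ) ^ m := by
  rcases Nat.eq_zero_or_pos m with h | h
  · subst h; simpa using Real.one_le_exp (by norm_num)
  · have hm : (0:ℝ) < m := by exact_mod_cast h
    have h1 : (m : ℝ) + 1 ≤ (m : ℝ) * Real.exp (1 / m) := by
      have := Real.add_one_le_exp (1 / (m:ℝ))
      calc (m:ℝ) + 1 = (m:ℝ) * (1/(m:ℝ) + 1) := by field_simp; ring
        _ ≤ (m:ℝ) * Real.exp (1/(m:ℝ)) := by gcongr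
    calc ((m : ℝ) + 1) ^ m ≤ ((m : ℝ) * Real.exp (1 / m)) ^ m := by
          exact pow_le_pow_left₀ (by positivity) h1 m
      _ = (m:ℝ)^m * Real.exp (1/m) ^ m := mul_pow _ _ _
      _ = (m:ℝ)^m * Real.exp 1 := by
          rw [← Real.exp_nat_mul]; congr 1; field_simp
      _ = Real.exp 1 * (m:ℝ)^m := by ring

lemma pow_div_e_le_factorial : ∀ m : ℕ, ((m : ℝ) / Real.exp 1) ^ m ≤ (m.factorial : ℝ) := by
  intro m
  induction m with
  | zero => simp
  | succ m ih =>
    have he : (0:ℝ) < Real.exp 1 := Real.exp_pos 1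
    have key : ((m:ℝ)+1)^m ≤ Real.exp 1 * (m:ℝ)^m := succ_pow_le m
    have h2 : (((m:ℕ)+1 : ℕ).factorial : ℝ) = ((m:ℝ)+1) * (m.factorial : ℝ) := by
      push_cast [Nat.factorial_succ]; ring
    rw [h2]
    have expand : (((m:ℝ)+1) / Real.exp 1) ^ (m+1)
        = (((m:ℝ)+1)/Real.exp 1) * ((((m:ℝ)+1))^m / Real.exp 1 ^ m) := by
      rw [pow_succ, div_pow]; ring
    push_cast
    rw [expand]
    have h3 : (((m:ℝ)+1))^m / Real.exp 1 ^ m ≤ Real.exp 1 * ((m:ℝ)/Real.exp 1)^m := by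
      rw [div_le_iff₀ (by positivity)]
      calc ((m:ℝ)+1)^m ≤ Real.exp 1 * (m:ℝ)^m := key
        _ = Real.exp 1 * ((m:ℝ)/Real.exp 1)^m * Real.exp 1 ^ m := by
            rw [div_pow]; field_simp
    calc (((m:ℝ)+1)/Real.exp 1) * ((((m:ℝ)+1))^m / Real.exp 1 ^ m)
        ≤ (((m:ℝ)+1)/Real.exp 1) * (Real.exp 1 * ((m:ℝ)/Real.exp 1)^m) := by
          gcongr
      _ = ((m:ℝ)+1) * ((m:ℝ)/Real.exp 1)^m := by field_simp
      _ ≤ ((m:ℝ)+1) * (m.factorial : ℝ) := by gcongr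


lemma gamma_half {x : ℝ} (h1 : 1 ≤ x) (h2 : x ≤ 2) : (1/2 : ℝ) ≤ Real.Gamma x := by
  have hx : (0:ℝ) < x := by linarith
  have hΓx : 0 < Real.Gamma x := Real.Gamma_pos_of_pos hx
  have hΓ3 : Real.Gamma 3 = 2 := by
    have := Real.Gamma_nat_eq_factorial 2
    norm_num at this; convert this using 2 <;> norm_num
  have hΓ2 : Real.Gamma 2 = 1 := by
    have := Real.Gamma_nat_eq_factorial 1
    norm_num at this; convert this using 2 <;> norm_num
  have h3x : (0:ℝ) < 3 - x := by linarith
  have hconv := Real.convexOn_log_Gamma.2 (mem_Ioi.2 hx) (mem_Ioi.2 (by norm_num : (0:ℝ) < 3))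
    (by positivity : (0:ℝ) ≤ 1/(3-x)) (by apply div_nonneg <;> linarith : (0:ℝ) ≤ (2-x)/(3-x))
    (by field_simp; ring)
  have hcomb : (1/(3-x)) • x + ((2-x)/(3-x)) • (3:ℝ) = 2 := by
    simp only [smul_eq_mul]; field_simp; ring
  rw [hcomb] at hconv
  simp only [Function.comp_apply, smul_eq_mul, hΓ2, hΓ3, Real.log_one] at hconv
  -- hconv : 0 ≤ 1/(3-x) * log (Γ x) + (2-x)/(3-x) * log 2
  have hlog : -Real.log 2 ≤ Real.log (Real.Gamma x) := by
    have h5 : 0 ≤ Real.log (Real.Gamma x) + (2-x) * Real.log 2 := by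
      have e1 : (3-x) * (1/(3-x) * Real.log (Real.Gamma x) + (2-x)/(3-x) * Real.log 2)
          = Real.log (Real.Gamma x) + (2-x) * Real.log 2 := by field_simp
      have e2 := mul_nonneg h3x.le hconv
      rw [e1] at e2; exact e2
    have hl2 : 0 ≤ Real.log 2 := Real.log_nonneg (by norm_num)
    nlinarith
  calc (1/2 : ℝ) = Real.exp (-Real.log 2) := by
        rw [Real.exp_neg, Real.exp_log (by norm_num : (0:ℝ) < 2)]; norm_num
    _ ≤ Real.exp (Real.log (Real.Gamma x)) := Real.exp_le_exp.2 hlog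
    _ = Real.Gamma x := Real.exp_log hΓx



lemma gamma_shift (θ : ℝ) (hθ : 0 ≤ θ) :
    ∀ m : ℕ, (m.factorial : ℝ) * Real.Gamma (θ + 1) ≤ Real.Gamma ((m : ℝ) + θ + 1) := by
  intro m
  induction m with
  | zero => simp
  | succ m ih =>
    have hpos : (0:ℝ) < (m:ℝ) + θ + 1 := by positivity
    have h1 : ((m:ℝ) + 1) + θ + 1 = ((m:ℝ) + θ + 1) + 1 := by ring
    have hG : Real.Gamma (((m:ℝ)+1) + θ + 1) = ((m:ℝ)+θ+1) * Real.Gamma ((m:ℝ)+θ+1) := by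
      rw [h1, Real.Gamma_add_one hpos.ne']
    have hcast : (((m+1) : ℕ):ℝ) = (m:ℝ)+1 := by push_cast; ring
    rw [hcast, hG]
    have hΓpos : 0 < Real.Gamma ((m:ℝ)+θ+1) := Real.Gamma_pos_of_pos hpos
    have hΓθ : 0 < Real.Gamma (θ+1) := Real.Gamma_pos_of_pos (by linarith)
    push_cast [Nat.factorial_succ]
    calc ((m:ℝ)+1) * (m.factorial : ℝ) * Real.Gamma (θ+1)
        ≤ ((m:ℝ)+1) * Real.Gamma ((m:ℝ)+θ+1) := by
          rw [mul_assoc]; gcongr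
      _ ≤ ((m:ℝ)+θ+1) * Real.Gamma ((m:ℝ)+θ+1) := by gcongr; linarith

lemma gamma_ge_floor {s : ℝ} (hs : 0 < s) :
    ((⌊s⌋₊.factorial : ℝ)) / 2 ≤ Real.Gamma (s + 1) := by
  set m := ⌊s⌋₊
  have hm : (m:ℝ) ≤ s := Nat.floor_le hs.le
  have hm2 : s < (m:ℝ) + 1 := Nat.lt_floor_add_one s
  set θ := s - (m:ℝ) with hθdef
  have hθ0 : 0 ≤ θ := by simp [hθdef]; linarith
  have hθ1 : θ < 1 := by simp [hθdef]; linarith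
  have h1 : s + 1 = (m:ℝ) + θ + 1 := by ring
  rw [h1]
  have h2 := gamma_shift θ hθ0 m
  have h3 : (1/2 : ℝ) ≤ Real.Gamma (θ + 1) := gamma_half (by linarith) (by linarith)
  calc ((m.factorial : ℝ)) / 2 = (m.factorial : ℝ) * (1/2) := by ring
    _ ≤ (m.factorial : ℝ) * Real.Gamma (θ+1) := by gcongr
    _ ≤ Real.Gamma ((m:ℝ) + θ + 1) := h2

lemma key_lower {s : ℝ} (hs : 0 < s) :
    (s / Real.exp 1) ^ s ≤ 2 * Real.exp 1 * (s + 1) * Real.Gamma (s + 1) := by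
  set m := ⌊s⌋₊
  have hm : (m:ℝ) ≤ s := Nat.floor_le hs.le
  have hm2 : s < (m:ℝ) + 1 := Nat.lt_floor_add_one s
  have he : (0:ℝ) < Real.exp 1 := Real.exp_pos 1
  have hΓ : 0 < Real.Gamma (s+1) := Real.Gamma_pos_of_pos (by linarith)
  have step1 : (s / Real.exp 1) ^ s ≤ (((m:ℝ)+1) / Real.exp 1) ^ s := by
    apply Real.rpow_le_rpow (by positivity) (by gcongr) hs.le
  have step2 : (((m:ℝ)+1) / Real.exp 1) ^ s ≤ ((m:ℝ)+1) * (((m:ℝ)+1)/Real.exp 1) ^ (m:ℕ) := by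
    rcases le_or_gt 1 (((m:ℝ)+1)/Real.exp 1) with hb | hb
    · calc (((m:ℝ)+1) / Real.exp 1) ^ s ≤ (((m:ℝ)+1) / Real.exp 1) ^ (((m:ℕ):ℝ)+1) :=
            Real.rpow_le_rpow_of_exponent_le hb (by push_cast; linarith)
        _ = (((m:ℝ)+1) / Real.exp 1) ^ ((m:ℕ)+1 : ℕ) := by
            rw [← Real.rpow_natCast _ (m+1)]; push_cast; ring_nf
        _ = (((m:ℝ)+1)/Real.exp 1) * (((m:ℝ)+1)/Real.exp 1) ^ (m:ℕ) := by
            rw [pow_succ]; ring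
        _ ≤ ((m:ℝ)+1) * (((m:ℝ)+1)/Real.exp 1) ^ (m:ℕ) := by
            apply mul_le_mul_of_nonneg_right _ (by positivity)
            calc ((m:ℝ)+1)/Real.exp 1 ≤ ((m:ℝ)+1)/1 := by
                  gcongr
                  exact Real.one_le_exp (by norm_num)
              _ = (m:ℝ)+1 := by ring
    · calc (((m:ℝ)+1) / Real.exp 1) ^ s ≤ (((m:ℝ)+1) / Real.exp 1) ^ ((m:ℕ):ℝ) :=
            Real.rpow_le_rpow_of_exponent_ge (by positivity) hb.le hm
        _ = (((m:ℝ)+1) / Real.exp 1) ^ (m:ℕ) := Real.rpow_natCast _ m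
        _ ≤ ((m:ℝ)+1) * (((m:ℝ)+1)/Real.exp 1) ^ (m:ℕ) := by
            nth_rewrite 1 [← one_mul ((((m:ℝ)+1)/Real.exp 1) ^ (m:ℕ))]
            apply mul_le_mul_of_nonneg_right (by push_cast; linarith) (by positivity)
  have step3 : (((m:ℝ)+1)/Real.exp 1) ^ (m:ℕ) ≤ Real.exp 1 * ((m:ℝ)/Real.exp 1) ^ (m:ℕ) := by
    rw [div_pow, div_pow]
    rw [div_le_iff₀ (by positivity), mul_assoc, div_mul_cancel₀ _ (by positivity : (Real.exp 1 ^ (m:ℕ)) ≠ 0)]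
    exact succ_pow_le m
  have step4 : ((m:ℝ)/Real.exp 1) ^ (m:ℕ) ≤ 2 * Real.Gamma (s+1) := by
    calc ((m:ℝ)/Real.exp 1) ^ (m:ℕ) ≤ (m.factorial : ℝ) := pow_div_e_le_factorial m
      _ = 2 * ((m.factorial : ℝ) / 2) := by ring
      _ ≤ 2 * Real.Gamma (s+1) := by gcongr; exact gamma_ge_floor hs
  calc (s / Real.exp 1) ^ s ≤ ((m:ℝ)+1) * (((m:ℝ)+1)/Real.exp 1) ^ (m:ℕ) :=
        le_trans step1 step2
    _ ≤ ((m:ℝ)+1) * (Real.exp 1 * ((m:ℝ)/Real.exp 1) ^ (m:ℕ)) := by gcongr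
    _ ≤ ((m:ℝ)+1) * (Real.exp 1 * (2 * Real.Gamma (s+1))) := by gcongr
    _ ≤ (s+1) * (Real.exp 1 * (2 * Real.Gamma (s+1))) := by gcongr
    _ = 2 * Real.exp 1 * (s + 1) * Real.Gamma (s + 1) := by ring



lemma gamma_interp {s : ℝ} (hs : 0 < s) (n : ℕ) (hn : 1 ≤ n) :
    Real.Gamma ((n:ℝ) + s + 1) ≤ (n.factorial : ℝ) * ((n:ℝ) + s + 1) ^ s := by
  set m := ⌊s⌋₊ with hmdef
  have hm : (m:ℝ) ≤ s := Nat.floor_le hs.le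
  have hm2 : s < (m:ℝ) + 1 := Nat.lt_floor_add_one s
  set θ := s - (m:ℝ) with hθdef
  have hθ0 : 0 ≤ θ := by simp only [hθdef]; linarith
  have hθ1 : θ < 1 := by simp only [hθdef]; linarith
  -- convexity at points n+m+1 and n+m+2 with weights 1-θ, θ
  have hx : (0:ℝ) < (n:ℝ) + (m:ℝ) + 1 := by positivity
  have hy : (0:ℝ) < (n:ℝ) + (m:ℝ) + 2 := by positivity
  have hconv := Real.convexOn_log_Gamma.2 (mem_Ioi.2 hx) (mem_Ioi.2 hy)
    (by linarith : (0:ℝ) ≤ 1 - θ) hθ0 (by ring)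
  have hcomb : (1-θ) • ((n:ℝ) + (m:ℝ) + 1) + θ • ((n:ℝ) + (m:ℝ) + 2) = (n:ℝ) + s + 1 := by
    simp only [smul_eq_mul, hθdef]; ring
  rw [hcomb] at hconv
  simp only [Function.comp_apply, smul_eq_mul] at hconv
  -- identify Gamma values with factorials
  have hGx : Real.Gamma ((n:ℝ) + (m:ℝ) + 1) = ((n+m).factorial : ℝ) := by
    have := Real.Gamma_nat_eq_factorial (n+m)
    rw [← this]; congr 1; push_cast; ring
  have hGy : Real.Gamma ((n:ℝ) + (m:ℝ) + 2) = ((n+m+1).factorial : ℝ) := by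
    have := Real.Gamma_nat_eq_factorial (n+m+1)
    rw [← this]; congr 1; push_cast; ring
  rw [hGx, hGy] at hconv
  have hfx : (0:ℝ) < ((n+m).factorial : ℝ) := by positivity
  have hfy : (0:ℝ) < ((n+m+1).factorial : ℝ) := by positivity
  -- exponentiate
  have hΓpos : 0 < Real.Gamma ((n:ℝ) + s + 1) := Real.Gamma_pos_of_pos (by positivity)
  have hexp : Real.Gamma ((n:ℝ) + s + 1)
      ≤ ((n+m).factorial : ℝ) ^ (1-θ) * ((n+m+1).factorial : ℝ) ^ θ := by
    have hR : (0:ℝ) < ((n+m).factorial : ℝ) ^ (1-θ) * ((n+m+1).factorial : ℝ) ^ θ := by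
      positivity
    rw [← Real.log_le_log_iff hΓpos hR, Real.log_mul (by positivity) (by positivity),
      Real.log_rpow hfx, Real.log_rpow hfy]
    exact hconv
  -- rewrite RHS
  have hsplit : ((n+m).factorial : ℝ) ^ (1-θ) * ((n+m+1).factorial : ℝ) ^ θ
      = ((n+m).factorial : ℝ) * ((n:ℝ)+(m:ℝ)+1) ^ θ := by
    have h1 : ((n+m+1).factorial : ℝ) = ((n+m).factorial : ℝ) * ((n:ℝ)+(m:ℝ)+1) := by
      rw [Nat.factorial_succ]; push_cast; ring
    rw [h1, Real.mul_rpow hfx.le (by positivity), ← mul_assoc,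
      ← Real.rpow_add hfx, sub_add_cancel, Real.rpow_one]
  rw [hsplit] at hexp
  have hfact : ((n+m).factorial : ℝ) ≤ (n.factorial : ℝ) * ((n:ℝ)+(m:ℝ)+1) ^ (m:ℕ) := by
    have h2 : ((n+m).factorial : ℝ) ≤ ((n.factorial * (n+m+1)^m : ℕ) : ℝ) :=
      by exact_mod_cast fact_add_le n m
    calc ((n+m).factorial : ℝ) ≤ ((n.factorial * (n+m+1)^m : ℕ) : ℝ) := h2
      _ = (n.factorial : ℝ) * ((n:ℝ)+(m:ℝ)+1) ^ (m:ℕ) := by push_cast; ring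
  have hbase1 : (1:ℝ) ≤ (n:ℝ)+(m:ℝ)+1 := by
    have : (0:ℝ) ≤ (n:ℝ) + (m:ℝ) := by positivity
    linarith
  have hmθ : (m:ℝ) + θ = s := by simp [hθdef]
  calc Real.Gamma ((n:ℝ) + s + 1) ≤ ((n+m).factorial : ℝ) * ((n:ℝ)+(m:ℝ)+1) ^ θ := hexp
    _ ≤ (n.factorial : ℝ) * ((n:ℝ)+(m:ℝ)+1) ^ (m:ℕ) * ((n:ℝ)+(m:ℝ)+1) ^ θ := by
        apply mul_le_mul_of_nonneg_right hfact (Real.rpow_nonneg (by linarith) θ)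
    _ = (n.factorial : ℝ) * ((n:ℝ)+(m:ℝ)+1) ^ ((m:ℝ) + θ) := by
        rw [mul_assoc, ← Real.rpow_natCast ((n:ℝ)+(m:ℝ)+1) m, ← Real.rpow_add (by linarith)]
    _ = (n.factorial : ℝ) * ((n:ℝ)+(m:ℝ)+1) ^ s := by rw [hmθ]
    _ ≤ (n.factorial : ℝ) * ((n:ℝ) + s + 1) ^ s := by
        apply mul_le_mul_of_nonneg_left _ (by positivity)
        apply Real.rpow_le_rpow (by linarith) (by linarith) hs.le

/-- The quantity `G_{n,k} = (2p_{n,k})^{2γ} Γ(n+2γ+1)/(Γ(2γ+1)² n!)` satisfies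
`G_{n,k} ≤ A_ν (B_ν/γ)^{4γ}` with constants depending only on `ν`. -/
theorem stmt14 (ν : ℝ) (hν : 0 < ν) (hν1 : ν ≤ 1) :
    ∃ A B : ℝ, 0 < A ∧ 0 < B ∧
      ∀ k : ℤ, k ≠ 0 → ∀ n : ℕ, 1 ≤ n →
        ∀ γ p : ℝ, γ = Real.sqrt ((k : ℝ) ^ 2 - ν ^ 2) → 0 < γ →
          p = ν / Real.sqrt (ν ^ 2 + ((n : ℝ) + γ) ^ 2) →
          (2 * p) ^ (2 * γ) * Real.Gamma ((n : ℝ) + 2 * γ + 1) /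
              (Real.Gamma (2 * γ + 1) ^ 2 * (n.factorial : ℝ)) ≤
            A * (B / γ) ^ (4 * γ) := by
  refine ⟨4 * Real.exp 2, Real.exp 2, by positivity, by positivity, ?_⟩
  intro k hk n hn γ p hγdef hγ hp
  set E := Real.exp 1 with hEdef
  have hEpos : 0 < E := Real.exp_pos 1
  have hE1 : 1 ≤ E := Real.one_le_exp (by norm_num)
  have hexp2 : Real.exp 2 = E * E := by rw [hEdef, ← Real.exp_add]; norm_num
  set s := 2 * γ with hsdef
  have hs : 0 < s := by positivity
  have hn1 : (1:ℝ) ≤ (n:ℝ) := by exact_mod_cast hn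
  have hnγ : (0:ℝ) < (n:ℝ) + γ := by linarith
  -- p bounds
  have hsqrt_pos : 0 < Real.sqrt (ν ^ 2 + ((n : ℝ) + γ) ^ 2) := by
    apply Real.sqrt_pos.2; positivity
  have hsqrt_ge : (n:ℝ) + γ ≤ Real.sqrt (ν ^ 2 + ((n : ℝ) + γ) ^ 2) := by
    calc (n:ℝ) + γ = Real.sqrt (((n:ℝ) + γ)^2) := (Real.sqrt_sq hnγ.le).symm
      _ ≤ Real.sqrt (ν ^ 2 + ((n : ℝ) + γ) ^ 2) := Real.sqrt_le_sqrt (by nlinarith)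
  have hppos : 0 < p := by rw [hp]; positivity
  have hple : p ≤ ν / ((n:ℝ) + γ) := by
    rw [hp]; gcongr
  have hpγ : p * ((n:ℝ) + γ) ≤ ν := by
    have := mul_le_mul_of_nonneg_right hple hnγ.le
    rwa [div_mul_cancel₀ _ hnγ.ne'] at this
  have key : 2 * p * ((n:ℝ) + s + 1) ≤ 4 := by
    have h1 : (n:ℝ) + s + 1 ≤ 2 * ((n:ℝ) + γ) := by rw [hsdef]; linarith
    nlinarith [hppos.le]
  -- positivity of denominator
  have hΓs : 0 < Real.Gamma (s + 1) := Real.Gamma_pos_of_pos (by linarith)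
  have hfacpos : (0:ℝ) < (n.factorial : ℝ) := by positivity
  have hD : 0 < Real.Gamma (s + 1) ^ 2 * (n.factorial : ℝ) :=
    mul_pos (pow_pos hΓs 2) hfacpos
  rw [div_le_iff₀ hD]
  set P := (Real.exp 2 / γ) ^ (4 * γ) with hPdef
  have hPpos : 0 < P := by
    rw [hPdef]; apply Real.rpow_pos_of_pos; positivity
  -- the key lower-bound computation
  set L := (s / E) ^ s with hLdef
  have hLnn : 0 ≤ L := Real.rpow_nonneg (by positivity) s
  have hL := key_lower hs
  have hc2 : L ^ 2 ≤ (2 * E * (s+1)) ^ 2 * Real.Gamma (s+1) ^ 2 := by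
    have h := pow_le_pow_left₀ hLnn hL 2
    calc L ^ 2 ≤ (2 * E * (s+1) * Real.Gamma (s+1)) ^ 2 := h
      _ = (2 * E * (s+1)) ^ 2 * Real.Gamma (s+1) ^ 2 := by ring
  have id1 : P * L ^ 2 = (2 * E) ^ (4 * γ) := by
    have hL2 : L ^ 2 = (s / E) ^ (4 * γ) := by
      rw [hLdef, pow_two, ← Real.rpow_add (by positivity : 0 < s / E)]
      congr 1; rw [hsdef]; ring
    rw [hL2, hPdef, ← Real.mul_rpow (by positivity) (by positivity)]
    congr 1
    rw [hexp2, hsdef, hEdef]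
    field_simp
  have comp : 4 ^ s * (2 * E * (s+1)) ^ 2 ≤ (4 * Real.exp 2) * (2 * E) ^ (4 * γ) := by
    have h2E : (2 * E) ^ (4 * γ) = 4 ^ s * Real.exp s ^ 2 := by
      have e1 : (4:ℝ) * γ = s * 2 := by rw [hsdef]; ring
      have e2 : (2 * E) ^ s = 2 ^ s * Real.exp s := by
        rw [Real.mul_rpow (by norm_num) hEpos.le, hEdef, Real.exp_one_rpow]
      have e3 : (4:ℝ) ^ s = 2 ^ s * 2 ^ s := by
        rw [show (4:ℝ) = 2 * 2 by norm_num,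
          Real.mul_rpow (by norm_num) (by norm_num)]
      rw [e1, Real.rpow_mul (by positivity) s 2, Real.rpow_two, e2, e3]
      ring
    rw [h2E]
    have hse : s + 1 ≤ Real.exp s := Real.add_one_le_exp s
    have h4s : (0:ℝ) < (4:ℝ) ^ s := Real.rpow_pos_of_pos (by norm_num) s
    have : (2 * E * (s+1)) ^ 2 ≤ 4 * Real.exp 2 * Real.exp s ^ 2 := by
      have hmul : (s+1) * (s+1) ≤ Real.exp s * Real.exp s :=
        mul_le_mul hse hse (by linarith) (Real.exp_pos s).le
      have expand : (2 * E * (s+1)) ^ 2 = 4 * (E * E) * ((s+1) * (s+1)) := by ring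
      rw [hexp2, expand, pow_two]
      apply mul_le_mul_of_nonneg_left hmul (by positivity)
    calc 4 ^ s * (2 * E * (s+1)) ^ 2 ≤ 4 ^ s * (4 * Real.exp 2 * Real.exp s ^ 2) := by
          apply mul_le_mul_of_nonneg_left this h4s.le
      _ = 4 * Real.exp 2 * (4 ^ s * Real.exp s ^ 2) := by ring
  have hfinal : (4:ℝ) ^ s ≤ 4 * Real.exp 2 * P * Real.Gamma (s+1) ^ 2 := by
    have hcpos : (0:ℝ) < (2 * E * (s+1)) ^ 2 := by positivity
    apply le_of_mul_le_mul_right _ hcpos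
    calc (4:ℝ) ^ s * (2 * E * (s+1)) ^ 2 ≤ (4 * Real.exp 2) * (2 * E) ^ (4 * γ) := comp
      _ = (4 * Real.exp 2) * (P * L ^ 2) := by rw [id1]
      _ ≤ (4 * Real.exp 2) * (P * ((2 * E * (s+1)) ^ 2 * Real.Gamma (s+1) ^ 2)) := by
          gcongr
      _ = 4 * Real.exp 2 * P * Real.Gamma (s+1) ^ 2 * (2 * E * (s+1)) ^ 2 := by ring
  -- main chain
  have h2p : (0:ℝ) ≤ 2 * p := by linarith
  have hnsp : (0:ℝ) ≤ (n:ℝ) + s + 1 := by positivity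
  have hrp : (0:ℝ) ≤ (2*p) ^ s := Real.rpow_nonneg h2p s
  calc (2*p) ^ s * Real.Gamma ((n:ℝ) + s + 1)
      ≤ (2*p) ^ s * ((n.factorial : ℝ) * ((n:ℝ) + s + 1) ^ s) := by
        apply mul_le_mul_of_nonneg_left (gamma_interp hs n hn) hrp
    _ = (n.factorial : ℝ) * ((2*p) * ((n:ℝ) + s + 1)) ^ s := by
        rw [Real.mul_rpow h2p hnsp]; ring
    _ ≤ (n.factorial : ℝ) * (4:ℝ) ^ s := by
        apply mul_le_mul_of_nonneg_left _ hfacpos.le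
        apply Real.rpow_le_rpow (by positivity) key hs.le
    _ ≤ (n.factorial : ℝ) * (4 * Real.exp 2 * P * Real.Gamma (s+1) ^ 2) := by
        apply mul_le_mul_of_nonneg_left hfinal hfacpos.le
    _ = 4 * Real.exp 2 * P * (Real.Gamma (s+1) ^ 2 * (n.factorial : ℝ)) := by ring
end
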